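/- Let f : ℝⁿ → ℝ be convex, differentiable, with L-Lipschitz gradient, let r : ℝⁿ → ℝ be convex, α > 0, and let x⁺ = prox_{αr}(x − α g) for some g ∈ ℝⁿ. Then for every point u: ⟨g, x⁺ − x⟩ + r(x⁺) + (1/(2α))‖x⁺ − x‖² ≤ ⟨g, u − x⟩ + r(u) + (1/(2α))(‖u − x‖² − ‖u − x⁺‖²). -/

import Mathlib

/-!
The prox objective `φ z = r z + ‖z - v‖² / (2α)` is `1/α`-strongly convex: subtracting
`‖z‖² / (2α)` leaves `r` plus an affine function. At a minimiser `p` of an `m`-strongly convex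
function, `φ p + m/2 ‖u - p‖² ≤ φ u`. Expanding `‖z - (x - α g)‖²` around `x` turns this
three-point inequality into the claim.
-/

open Filter Topology

section NormedSpace

variable {E : Type*} [NormedAddCommGroup E] [NormedSpace ℝ E] {s : Set E} {m : ℝ} {f : E → ℝ}

/-- Comparing `f p` with `f` at `p + t (u - p)` gives `f p + (1 - t) m/2 ‖u - p‖² ≤ f u` for
`t ∈ (0, 1]`; let `t → 0⁺`. -/
theorem StrongConvexOn.add_sq_norm_sub_le_of_isMinOn (hf : StrongConvexOn s m f) {p u : E}
    (hp : p ∈ s) (hu : u ∈ s) (hmin : IsMinOn f s p) :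
    f p + m / 2 * ‖u - p‖ ^ 2 ≤ f u := by
  have hstep : ∀ t ∈ Set.Ioc (0 : ℝ) 1, f p + (1 - t) * (m / 2 * ‖u - p‖ ^ 2) ≤ f u := by
    rintro t ⟨ht0, ht1⟩
    have hconv := hf.2 hp hu (sub_nonneg.2 ht1) ht0.le (sub_add_cancel 1 t)
    have hle : f p ≤ f ((1 - t) • p + t • u) :=
      hmin (hf.1 hp hu (sub_nonneg.2 ht1) ht0.le (sub_add_cancel 1 t))
    rw [norm_sub_rev, smul_eq_mul, smul_eq_mul] at hconv
    refine le_of_mul_le_mul_left ?_ ht0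
    linarith
  have hlim : Tendsto (fun t : ℝ ↦ f p + (1 - t) * (m / 2 * ‖u - p‖ ^ 2)) (𝓝[>] 0)
      (𝓝 (f p + m / 2 * ‖u - p‖ ^ 2)) :=
    tendsto_nhdsWithin_of_tendsto_nhds ((by fun_prop : Continuous fun t : ℝ ↦
      f p + (1 - t) * (m / 2 * ‖u - p‖ ^ 2)).tendsto' 0 _ (by simp))
  exact le_of_tendsto hlim (eventually_of_mem (Ioc_mem_nhdsGT one_pos) hstep)

end NormedSpace

section InnerProductSpace

variable {E : Type*} [NormedAddCommGroup E] [InnerProductSpace ℝ E] {s : Set E} {r : E → ℝ}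

theorem ConvexOn.strongConvexOn_add_mul_sq_norm_sub (hr : ConvexOn ℝ s r) (c : ℝ) (v : E) :
    StrongConvexOn s (2 * c) fun z ↦ r z + c * ‖z - v‖ ^ 2 := by
  rw [strongConvexOn_iff_convex]
  refine ((hr.add_const (c * ‖v‖ ^ 2)).add (((-(2 * c)) • innerₗ E v).convexOn hr.1)).congr ?_
  intro z _
  simp only [Pi.add_apply, LinearMap.smul_apply, innerₗ_apply_apply, smul_eq_mul, norm_sub_sq_real,
    real_inner_comm v z]
  ring

theorem norm_sub_sub_smul_sq (z x g : E) (α : ℝ) :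
    ‖z - (x - α • g)‖ ^ 2 = ‖z - x‖ ^ 2 + 2 * α * inner ℝ g (z - x) + α ^ 2 * ‖g‖ ^ 2 := by
  rw [show z - (x - α • g) = (z - x) + α • g by abel, norm_add_sq_real, real_inner_smul_right,
    norm_smul, real_inner_comm, Real.norm_eq_abs, mul_pow, sq_abs]
  ring

end InnerProductSpace

theorem stmt_18_general (n : ℕ)
    (r : EuclideanSpace ℝ (Fin n) → ℝ) (hr : ConvexOn ℝ Set.univ r)
    (α : ℝ) (hα : 0 < α)
    (x g xp : EuclideanSpace ℝ (Fin n))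
    (hxp : ∀ z, r xp + (1 / (2 * α)) * ‖xp - (x - α • g)‖ ^ 2 ≤
      r z + (1 / (2 * α)) * ‖z - (x - α • g)‖ ^ 2) :
    ∀ u, (inner ℝ g (xp - x) : ℝ) + r xp + (1 / (2 * α)) * ‖xp - x‖ ^ 2 ≤
      (inner ℝ g (u - x) : ℝ) + r u +
        (1 / (2 * α)) * (‖u - x‖ ^ 2 - ‖u - xp‖ ^ 2) := by
  intro u
  have hthree := (hr.strongConvexOn_add_mul_sq_norm_sub (1 / (2 * α)) (x - α • g))
    |>.add_sq_norm_sub_le_of_isMinOn (Set.mem_univ xp) (Set.mem_univ u)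
      (isMinOn_univ_iff.2 hxp)
  rw [norm_sub_sub_smul_sq, norm_sub_sub_smul_sq] at hthree
  field_simp at hthree ⊢
  linarith

theorem stmt_18 (n : ℕ) (f : EuclideanSpace ℝ (Fin n) → ℝ)
    (Gf : EuclideanSpace ℝ (Fin n) → EuclideanSpace ℝ (Fin n))
    (hf : ConvexOn ℝ Set.univ f)
    (hGf : ∀ x, HasGradientAt f (Gf x) x)
    (L : ℝ) (hL : 0 < L)
    (hlip : ∀ x y, ‖Gf x - Gf y‖ ≤ L * ‖x - y‖)
    (r : EuclideanSpace ℝ (Fin n) → ℝ) (hr : ConvexOn ℝ Set.univ r)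
    (α : ℝ) (hα : 0 < α)
    (x g xp : EuclideanSpace ℝ (Fin n))
    (hxp : ∀ z, r xp + (1 / (2 * α)) * ‖xp - (x - α • g)‖ ^ 2 ≤
      r z + (1 / (2 * α)) * ‖z - (x - α • g)‖ ^ 2) :
    ∀ u, (inner ℝ g (xp - x) : ℝ) + r xp + (1 / (2 * α)) * ‖xp - x‖ ^ 2 ≤
      (inner ℝ g (u - x) : ℝ) + r u +
        (1 / (2 * α)) * (‖u - x‖ ^ 2 - ‖u - xp‖ ^ 2) :=
  stmt_18_general n r hr α hα x g xp hxp
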